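/- Let ξ be a nonnegative real random variable whose law has density f_ξ(y) = y^a e^{-y/b} / (b^{a+1} Γ(a+1)) for y > 0, where a > -1 and b > 0, and let γ̄ > 0, p > 0, q > 0. Then the average symbol error probability of the RIS-assisted link satisfies E[p · Q(√(2 q γ̄ ξ²))] = (p √q / (2 √π Γ(a+1))) ∫₀^∞ e^{-q t} t^{-1/2} γ_low(a+1, √t/(b√γ̄)) dt, where γ_low(s, x) = ∫₀^x u^{s-1} e^{-u} du is the lower incomplete Gamma function and Q(x) = (1/√(2π)) ∫_x^∞ e^{-s²/2} ds is the Gaussian Q-function. -/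

import Mathlib

/-!
For `x ≥ 0` the substitution `s = √(2 q t)` gives
`Q(x) = (√q / (2√π)) ∫_{x²/(2q)}^∞ e^{-qt} t^{-1/2} dt`. Taking `x = √(2 q γ̄) ξ` and exchanging
expectation and integral (Fubini: the integrand is dominated by the integrable `e^{-qt} t^{-1/2}`
and `P` is finite) turns the average into `∫₀^∞ e^{-qt} t^{-1/2} P(γ̄ ξ² < t) dt`. Finally
`P(γ̄ ξ² < t)` is the Gamma-type distribution function at `√(t/γ̄)`, which the substitution
`y = b u` identifies with `γ_low(a+1, √t/(b√γ̄)) / Γ(a+1)`.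
-/

open MeasureTheory Real Set

noncomputable def gaussQ (x : ℝ) : ℝ :=
  (1 / Real.sqrt (2 * π)) * ∫ s in Set.Ioi x, Real.exp (-s ^ 2 / 2)

noncomputable def lowerIncGamma (s x : ℝ) : ℝ :=
  ∫ u in Set.Ioc (0 : ℝ) x, u ^ (s - 1) * Real.exp (-u)

theorem image_sq_div_Ioi {c x : ℝ} (hc : 0 < c) (hx : 0 ≤ x) :
    (fun s : ℝ => s ^ 2 / c) '' Ioi x = Ioi (x ^ 2 / c) := by
  ext t
  simp only [mem_image, mem_Ioi]
  constructor
  · rintro ⟨s, hs, rfl⟩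
    gcongr
  · intro ht
    have hct : x ^ 2 < c * t := by rwa [div_lt_iff₀ hc, mul_comm] at ht
    refine ⟨√(c * t), (lt_sqrt hx).mpr hct, ?_⟩
    rw [sq_sqrt (by nlinarith [sq_nonneg x]), mul_div_cancel_left₀ _ hc.ne']

theorem setIntegral_Ioi_sq_div_exp_neg_mul_rpow {q x : ℝ} (hq : 0 < q) (hx : 0 ≤ x) :
    ∫ t in Ioi (x ^ 2 / (2 * q)), exp (-q * t) * t ^ (-(1 : ℝ) / 2) =
      √(2 * q) / q * ∫ s in Ioi x, exp (-s ^ 2 / 2) := by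
  have hderiv :
      ∀ s ∈ Ioi x, HasDerivWithinAt (fun s : ℝ => s ^ 2 / (2 * q)) (s / q) (Ioi x) s := by
    intro s _
    refine ((hasDerivAt_pow 2 s).div_const (2 * q)).hasDerivWithinAt.congr_deriv ?_
    field_simp
    ring
  have hinj : InjOn (fun s : ℝ => s ^ 2 / (2 * q)) (Ioi x) := by
    intro u hu v hv huv
    exact (sq_eq_sq₀ (hx.trans hu.le) (hx.trans hv.le)).mp
      ((div_left_inj' (by positivity)).mp huv)
  rw [← image_sq_div_Ioi (by positivity) hx,
    integral_image_eq_integral_abs_deriv_smul measurableSet_Ioi hderiv hinj, ← integral_const_mul]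
  refine setIntegral_congr_fun measurableSet_Ioi fun s (hs : x < s) => ?_
  have hs0 : 0 < s := hx.trans_lt hs
  have hpow : (s ^ 2 / (2 * q)) ^ (-(1 : ℝ) / 2) = √(2 * q) / s := by
    rw [neg_div, rpow_neg (by positivity), ← sqrt_eq_rpow, sqrt_div' _ (by positivity),
      sqrt_sq hs0.le, inv_div]
  rw [smul_eq_mul, hpow, abs_of_pos (div_pos hs0 hq)]
  field_simp

theorem gaussQ_eq_mul_setIntegral {q x : ℝ} (hq : 0 < q) (hx : 0 ≤ x) :
    gaussQ x = √q / (2 * √π) *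
      ∫ t in Ioi (x ^ 2 / (2 * q)), exp (-q * t) * t ^ (-(1 : ℝ) / 2) := by
  rw [setIntegral_Ioi_sq_div_exp_neg_mul_rpow hq hx, gaussQ, ← mul_assoc, sqrt_mul zero_le_two,
    sqrt_mul zero_le_two]
  congr 1
  field_simp
  rw [sq_sqrt zero_le_two, sq_sqrt hq.le]

theorem integrableOn_exp_neg_mul_mul_rpow_neg_half {q : ℝ} (hq : 0 < q) :
    IntegrableOn (fun t : ℝ => exp (-q * t) * t ^ (-(1 : ℝ) / 2)) (Ioi 0) := by
  refine (integrableOn_rpow_mul_exp_neg_mul_rpow (s := -(1 : ℝ) / 2) (by norm_num) zero_lt_one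
    hq).congr_fun (fun t _ => ?_) measurableSet_Ioi
  simp only [rpow_one, mul_comm]

theorem integral_setIntegral_Ioi_eq_setIntegral_measureReal {α : Type*} [MeasurableSpace α]
    {μ : Measure α} [IsFiniteMeasure μ] {φ : α → ℝ} (hφ : Measurable φ) {c : ℝ}
    (hφc : ∀ y, c ≤ φ y) {h : ℝ → ℝ} (hh : IntegrableOn h (Ioi c)) :
    ∫ y, (∫ t in Ioi (φ y), h t) ∂μ = ∫ t in Ioi c, μ.real {y | φ y < t} * h t := by
  set f : α → ℝ → ℝ := fun y t => {y | φ y < t}.indicator (fun _ => h t) y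
  have hinner : ∀ y, ∫ t in Ioi (φ y), h t = ∫ t in Ioi c, f y t := by
    intro y
    have hf : f y = (Ioi (φ y)).indicator h := by
      ext t; simp [f, indicator]
    rw [hf, setIntegral_indicator measurableSet_Ioi, Ioi_inter_Ioi, sup_eq_right.mpr (hφc y)]
  have hint : Integrable (Function.uncurry f) (μ.prod (volume.restrict (Ioi c))) := by
    have hset : MeasurableSet {z : α × ℝ | φ z.1 < z.2} :=
      measurableSet_lt (hφ.comp measurable_fst) measurable_snd
    have heq : Function.uncurry f = {z : α × ℝ | φ z.1 < z.2}.indicator (fun z => h z.2) := by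
      ext ⟨y, t⟩; simp [f, indicator]
    rw [heq]
    exact (hh.comp_snd μ).indicator hset
  simp_rw [hinner]
  rw [integral_integral_swap hint]
  refine setIntegral_congr_fun measurableSet_Ioi fun t _ => ?_
  simp only [f]
  rw [integral_indicator_const _ (measurableSet_lt hφ measurable_const), smul_eq_mul]

noncomputable def gammaTypePDF (a b y : ℝ) : ℝ :=
  if 0 < y then y ^ a * exp (-y / b) / (b ^ (a + 1) * Gamma (a + 1)) else 0

theorem gammaTypePDF_of_pos {a b y : ℝ} (hy : 0 < y) :
    gammaTypePDF a b y = y ^ a * exp (-y / b) / (b ^ (a + 1) * Gamma (a + 1)) :=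
  if_pos hy

theorem gammaTypePDF_of_nonpos {a b y : ℝ} (hy : y ≤ 0) : gammaTypePDF a b y = 0 :=
  if_neg hy.not_gt

theorem gammaTypePDF_nonneg {a b : ℝ} (ha : -1 < a) (hb : 0 < b) (y : ℝ) :
    0 ≤ gammaTypePDF a b y := by
  have := Gamma_pos_of_pos (show 0 < a + 1 by linarith)
  unfold gammaTypePDF
  split_ifs <;> positivity

theorem setIntegral_Ioc_rpow_mul_exp_neg_div {a b : ℝ} (hb : 0 < b) (X : ℝ) :
    ∫ y in Ioc 0 X, y ^ a * exp (-y / b) = b ^ (a + 1) * lowerIncGamma (a + 1) (X / b) := by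
  have hderiv : ∀ u ∈ Ioc 0 (X / b), HasDerivWithinAt (b * ·) b (Ioc 0 (X / b)) u :=
    fun u _ => by simpa using ((hasDerivAt_id u).const_mul b).hasDerivWithinAt
  have himage : (b * ·) '' Ioc 0 (X / b) = Ioc 0 X := by
    rw [image_mul_left_Ioc hb, mul_zero, mul_div_cancel₀ _ hb.ne']
  rw [← himage, integral_image_eq_integral_abs_deriv_smul measurableSet_Ioc hderiv
    (mul_right_injective₀ hb.ne').injOn, lowerIncGamma, ← integral_const_mul]
  refine setIntegral_congr_fun measurableSet_Ioc fun u hu => ?_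
  rw [smul_eq_mul, abs_of_pos hb, mul_rpow hb.le hu.1.le, neg_div, mul_div_cancel_left₀ _ hb.ne',
    add_sub_cancel_right, rpow_add_one hb.ne']
  ring

theorem measureReal_withDensity_gammaTypePDF_Ioo {a b : ℝ} (ha : -1 < a) (hb : 0 < b) (r : ℝ) :
    (volume.withDensity fun y => ENNReal.ofReal (gammaTypePDF a b y)).real (Ioo (-r) r) =
      lowerIncGamma (a + 1) (r / b) / Gamma (a + 1) := by
  have hmeas : Measurable (gammaTypePDF a b) :=
    Measurable.ite measurableSet_Ioi (by fun_prop) measurable_const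
  have hvanish : ∀ y ∈ Ioo (-r) r \ Ioo 0 r, gammaTypePDF a b y = 0 :=
    fun y hy => gammaTypePDF_of_nonpos (not_lt.mp fun h => hy.2 ⟨h, hy.1.2⟩)
  rw [measureReal_def, withDensity_apply _ measurableSet_Ioo, ← integral_eq_lintegral_of_nonneg_ae
    (.of_forall (gammaTypePDF_nonneg ha hb)) hmeas.aestronglyMeasurable,
    setIntegral_eq_of_subset_of_forall_sdiff_eq_zero measurableSet_Ioo
      (fun y hy => ⟨by linarith [hy.1, hy.2], hy.2⟩) hvanish, ← integral_Ioc_eq_integral_Ioo,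
    setIntegral_congr_fun measurableSet_Ioc fun y hy => gammaTypePDF_of_pos hy.1, integral_div,
    setIntegral_Ioc_rpow_mul_exp_neg_div hb]
  field_simp

theorem asep_ris_general
    {Ω : Type*} [MeasurableSpace Ω] (P : Measure Ω) [IsProbabilityMeasure P]
    (ξ : Ω → ℝ) (hξmeas : Measurable ξ)
    (a b γbar : ℝ) (ha : -1 < a) (hb : 0 < b) (hγbar : 0 < γbar)
    (hlaw : Measure.map ξ P =
      volume.withDensity (fun y => ENNReal.ofReal
        (if 0 < y then y ^ a * Real.exp (-y / b) / (b ^ (a + 1) * Real.Gamma (a + 1))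
         else 0)))
    (p q : ℝ) (hq : 0 < q) :
    (∫ ω, p * gaussQ (Real.sqrt (2 * q * (γbar * (ξ ω) ^ 2))) ∂P) =
      (p * Real.sqrt q / (2 * Real.sqrt π * Real.Gamma (a + 1))) *
        ∫ t in Set.Ioi (0 : ℝ),
          Real.exp (-q * t) * t ^ (-(1 : ℝ) / 2) *
            lowerIncGamma (a + 1) (Real.sqrt t / (b * Real.sqrt γbar)) := by
  change Measure.map ξ P = volume.withDensity fun y => ENNReal.ofReal (gammaTypePDF a b y) at hlaw
  have hQ : ∀ ω, p * gaussQ (√(2 * q * (γbar * ξ ω ^ 2))) = p * (√q / (2 * √π)) *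
      ∫ t in Ioi (γbar * ξ ω ^ 2), exp (-q * t) * t ^ (-(1 : ℝ) / 2) := fun ω => by
    rw [gaussQ_eq_mul_setIntegral hq (sqrt_nonneg _), sq_sqrt (by positivity),
      mul_div_cancel_left₀ _ (by positivity), mul_assoc]
  have hlevel : ∀ t ∈ Ioi (0 : ℝ), P.real {ω | γbar * ξ ω ^ 2 < t} =
      lowerIncGamma (a + 1) (√t / (b * √γbar)) / Gamma (a + 1) := fun t (ht : 0 < t) => by
    have hset : {ω | γbar * ξ ω ^ 2 < t} = ξ ⁻¹' Ioo (-√(t / γbar)) √(t / γbar) := by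
      ext ω
      simp only [mem_ofPred_eq, mem_preimage, mem_Ioo, ← sq_lt, lt_div_iff₀ hγbar, mul_comm]
    rw [hset, ← map_measureReal_apply hξmeas measurableSet_Ioo, hlaw,
      measureReal_withDensity_gammaTypePDF_Ioo ha hb, sqrt_div' _ hγbar.le, div_div,
      mul_comm √γbar]
  calc ∫ ω, p * gaussQ (√(2 * q * (γbar * ξ ω ^ 2))) ∂P
      = p * (√q / (2 * √π)) *
          ∫ ω, (∫ t in Ioi (γbar * ξ ω ^ 2), exp (-q * t) * t ^ (-(1 : ℝ) / 2)) ∂P := by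
        simp_rw [hQ]
        exact integral_const_mul _ _
    _ = p * (√q / (2 * √π)) *
          ∫ t in Ioi 0,
            P.real {ω | γbar * ξ ω ^ 2 < t} * (exp (-q * t) * t ^ (-(1 : ℝ) / 2)) := by
        rw [integral_setIntegral_Ioi_eq_setIntegral_measureReal (by fun_prop)
          (fun ω => by positivity) (integrableOn_exp_neg_mul_mul_rpow_neg_half hq)]
    _ = _ := by
        rw [setIntegral_congr_fun measurableSet_Ioi fun t ht => by
          rw [hlevel t ht, div_mul_eq_mul_div, mul_comm], integral_div]
        ring

/-- For a nonnegative random variable `ξ` with the Gamma-type density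
`y ^ a * exp (-y / b) / (b ^ (a+1) * Γ(a+1))` on `(0, ∞)` (parameters `a > -1`, `b > 0`),
average SNR `γ̄ > 0`, and modulation constants `p, q > 0`, the average symbol error
probability of the RIS-assisted link satisfies
`E[p Q(√(2 q γ̄ ξ²))]
  = (p √q / (2 √π Γ(a+1))) ∫₀^∞ e^(-q t) t^(-1/2) γ_low(a+1, √t/(b√γ̄)) dt`. -/
theorem asep_ris
    {Ω : Type*} [MeasurableSpace Ω] (P : Measure Ω) [IsProbabilityMeasure P]
    (ξ : Ω → ℝ) (hξmeas : Measurable ξ) (hξnn : ∀ ω, 0 ≤ ξ ω)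
    (a b γbar : ℝ) (ha : -1 < a) (hb : 0 < b) (hγbar : 0 < γbar)
    (hlaw : Measure.map ξ P =
      volume.withDensity (fun y => ENNReal.ofReal
        (if 0 < y then y ^ a * Real.exp (-y / b) / (b ^ (a + 1) * Real.Gamma (a + 1))
         else 0)))
    (p q : ℝ) (hp : 0 < p) (hq : 0 < q) :
    (∫ ω, p * gaussQ (Real.sqrt (2 * q * (γbar * (ξ ω) ^ 2))) ∂P) =
      (p * Real.sqrt q / (2 * Real.sqrt π * Real.Gamma (a + 1))) *
        ∫ t in Set.Ioi (0 : ℝ),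
          Real.exp (-q * t) * t ^ (-(1 : ℝ) / 2) *
            lowerIncGamma (a + 1) (Real.sqrt t / (b * Real.sqrt γbar)) :=
  asep_ris_general P ξ hξmeas a b γbar ha hb hγbar hlaw p q hq
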